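/- arXiv:2103.12911 — 3 statements merged into one kernel-verified Lean document; each statement's English description precedes it below -/
import Mathlib

section
/- Suppose each utility f_i is concave on ℝ≥0. If x° is a social welfare equilibrium (a maximizer of ∑ f_i(x_i) subject to x_i ≥ 0 and ∑ x_i = ∑ a_i), then there exists λ* ∈ ℝ such that (λ*, x°) is a competitive equilibrium, i.e., each x_i° maximizes x ↦ f_i(x) + λ*(a_i - x) over x ≥ 0. -/
/-!
Let `λ` be the infimum of the left secant slopes of the `f j` at `x°ⱼ` (over agents with
`x°ⱼ > 0`, which exist since `∑ aᵢ > 0`). Moving `u` units from agent `j` to agent `i` cannot raise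
welfare, so every right secant slope of `f i` at `x°ᵢ` over a step `u` is at most the left secant
slope of `f j` at `x°ⱼ` over the same step; by concavity the comparison extends to secants of any
length. Hence `λ` lies between all right and all left slopes, i.e. `x ↦ f i (x°ᵢ) + λ (x - x°ᵢ)`
is a supporting line of `f i` at `x°ᵢ`, which is the competitive-equilibrium condition.
-/

open Finset

lemma le_add_mul_sub_of_slope_le_of_le_slope {g : ℝ → ℝ} {p c x : ℝ}
    (hright : p < x → slope g p x ≤ c) (hleft : x < p → c ≤ slope g p x) :
    g x ≤ g p + c * (x - p) := by
  rcases lt_trichotomy x p with hxp | rfl | hpx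
  · have h := hleft hxp
    rw [slope_def_field, le_div_iff_of_neg (sub_neg.2 hxp)] at h
    linarith
  · simp
  · have h := hright hpx
    rw [slope_def_field, div_le_iff₀ (sub_pos.2 hpx)] at h
    linarith

lemma sum_sub_sum_eq_add_of_eq_off_pair {ι : Type*} [Fintype ι] (g : ι → ℝ → ℝ)
    {x y : ι → ℝ} {i j : ι} (hij : i ≠ j) (hxy : ∀ k, k ≠ i → k ≠ j → x k = y k) :
    ∑ k, g k (x k) - ∑ k, g k (y k) = (g i (x i) - g i (y i)) + (g j (x j) - g j (y j)) := by
  rw [← sum_sub_distrib]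
  exact Fintype.sum_eq_add i j hij fun k ⟨hki, hkj⟩ ↦ by rw [hxy k hki hkj, sub_self]

def IsWelfareMax {ι : Type*} [Fintype ι] (f : ι → ℝ → ℝ) (c : ℝ) (xo : ι → ℝ) : Prop :=
  ∀ x : ι → ℝ, (∀ i, 0 ≤ x i) → ∑ i, x i = c → ∑ i, f i (x i) ≤ ∑ i, f i (xo i)

namespace IsWelfareMax

variable {ι : Type*} [Fintype ι] {f : ι → ℝ → ℝ} {c : ℝ} {xo : ι → ℝ}

lemma transfer_le [DecidableEq ι] (hopt : IsWelfareMax f c xo) (hpos : ∀ i, 0 ≤ xo i)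
    (hbal : ∑ i, xo i = c) {i j : ι} (hij : i ≠ j) {t : ℝ} (ht : 0 ≤ t) (htj : t ≤ xo j) :
    f i (xo i + t) + f j (xo j - t) ≤ f i (xo i) + f j (xo j) := by
  set x := Function.update (Function.update xo i (xo i + t)) j (xo j - t)
  have hxi : x i = xo i + t := by simp [x, Function.update_of_ne hij]
  have hxj : x j = xo j - t := by simp [x]
  have hoff : ∀ k, k ≠ i → k ≠ j → x k = xo k := fun k hki hkj ↦ by
    simp [x, Function.update_of_ne hki, Function.update_of_ne hkj]
  have hfeas : ∀ k, 0 ≤ x k := fun k ↦ by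
    by_cases hki : k = i
    · subst hki; rw [hxi]; linarith [hpos k]
    by_cases hkj : k = j
    · subst hkj; rw [hxj]; linarith
    rw [hoff k hki hkj]; exact hpos k
  have hsum : ∑ k, x k = c := by
    have h := sum_sub_sum_eq_add_of_eq_off_pair (fun _ v ↦ v) hij hoff
    simp only [hxi, hxj] at h
    linarith
  have hwelfare := sum_sub_sum_eq_add_of_eq_off_pair f hij hoff
  rw [hxi, hxj] at hwelfare
  linarith [hopt x hfeas hsum]

lemma slope_le_slope (hopt : IsWelfareMax f c xo) (hpos : ∀ i, 0 ≤ xo i)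
    (hbal : ∑ i, xo i = c) (hconc : ∀ i, ConcaveOn ℝ (Set.Ici 0) (f i)) {i j : ι} {y z : ℝ}
    (hy : xo i < y) (hz₀ : 0 ≤ z) (hz : z < xo j) :
    slope (f i) (xo i) y ≤ slope (f j) (xo j) z := by
  classical
  have hyi : y ∈ Set.Ici (0 : ℝ) := le_trans (hpos i) hy.le
  by_cases hij : i = j
  · subst hij
    exact (hconc i).slope_anti (hpos i) ⟨hz₀, hz.ne⟩ ⟨hyi, hy.ne'⟩ (hz.trans hy).le
  set u := min (y - xo i) (xo j - z)
  have hu : 0 < u := lt_min (sub_pos.2 hy) (sub_pos.2 hz)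
  have huy : xo i + u ≤ y := by linarith [min_le_left (y - xo i) (xo j - z)]
  have huz : z ≤ xo j - u := by linarith [min_le_right (y - xo i) (xo j - z)]
  have htransfer := hopt.transfer_le hpos hbal hij hu.le (by linarith)
  calc slope (f i) (xo i) y
      ≤ slope (f i) (xo i) (xo i + u) :=
        (hconc i).antitoneOn_slope_gt (hpos i) ⟨Set.mem_Ici.2 (by linarith [hpos i]), by linarith⟩
          ⟨hyi, hy⟩ huy
    _ ≤ slope (f j) (xo j) (xo j - u) := by
        rw [slope_def_field, slope_def_field, add_sub_cancel_left, sub_sub_cancel_left, div_neg,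
          ← neg_div]
        gcongr
        linarith
    _ ≤ slope (f j) (xo j) z :=
        (hconc j).antitoneOn_slope_lt (hpos j) ⟨hz₀, hz⟩ ⟨hz₀.trans huz, by linarith⟩ huz

end IsWelfareMax

theorem social_welfare_implies_competitive_general
    (n : ℕ) (a : Fin n → ℝ) (f : Fin n → ℝ → ℝ)
    (hapos : 0 < ∑ i, a i)
    (hconc : ∀ i, ConcaveOn ℝ (Set.Ici (0 : ℝ)) (f i))
    (xo : Fin n → ℝ)
    (hpos : ∀ i, 0 ≤ xo i)
    (hbal : ∑ i, xo i = ∑ i, a i)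
    (hopt : ∀ x : Fin n → ℝ, (∀ i, 0 ≤ x i) → (∑ i, x i = ∑ i, a i) →
      ∑ i, f i (x i) ≤ ∑ i, f i (xo i)) :
    ∃ lam : ℝ, ∀ i, ∀ x : ℝ, 0 ≤ x →
      f i x + lam * (a i - x) ≤ f i (xo i) + lam * (a i - xo i) := by
  obtain ⟨j, -, hj⟩ : ∃ j ∈ univ, (0 : Fin n → ℝ) j < xo j :=
    exists_lt_of_sum_lt (by simpa [hbal] using hapos)
  set L := {l | ∃ j, ∃ z ∈ Set.Ico 0 (xo j), slope (f j) (xo j) z = l}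
  have hbound : ∀ i y, xo i < y → ∀ l ∈ L, slope (f i) (xo i) y ≤ l := by
    rintro i y hy _ ⟨j, z, ⟨hz₀, hz⟩, rfl⟩
    exact IsWelfareMax.slope_le_slope hopt hpos hbal hconc hy hz₀ hz
  have hne : L.Nonempty := ⟨_, j, 0, ⟨le_rfl, hj⟩, rfl⟩
  have hbdd : BddBelow L := ⟨_, hbound j (xo j + 1) (lt_add_one _)⟩
  refine ⟨sInf L, fun i x hx ↦ ?_⟩
  have hsupport : f i x ≤ f i (xo i) + sInf L * (x - xo i) :=
    le_add_mul_sub_of_slope_le_of_le_slope (fun h ↦ le_csInf hne (hbound i x h))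
      (fun h ↦ csInf_le hbdd ⟨i, x, ⟨hx, h⟩, rfl⟩)
  linarith

/-- a social welfare equilibrium yields a competitive equilibrium price. -/
theorem social_welfare_implies_competitive
    (n : ℕ) (a : Fin n → ℝ) (f : Fin n → ℝ → ℝ)
    (ha : ∀ i, 0 ≤ a i) (hapos : 0 < ∑ i, a i)
    (hconc : ∀ i, ConcaveOn ℝ (Set.Ici (0 : ℝ)) (f i))
    (xo : Fin n → ℝ)
    (hpos : ∀ i, 0 ≤ xo i)
    (hbal : ∑ i, xo i = ∑ i, a i)
    (hopt : ∀ x : Fin n → ℝ, (∀ i, 0 ≤ x i) → (∑ i, x i = ∑ i, a i) →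
      ∑ i, f i (x i) ≤ ∑ i, f i (xo i)) :
    ∃ lam : ℝ, ∀ i, ∀ x : ℝ, 0 ≤ x →
      f i x + lam * (a i - x) ≤ f i (xo i) + lam * (a i - xo i) :=
  social_welfare_implies_competitive_general n a f hapos hconc xo hpos hbal hopt
end

section
/- In the trading model, if (λ*, x*, e*) is a competitive equilibrium (each pair (x_i*, e_i*) maximizes f_i(x_i) + λ* e_i subject to x_i + e_i ≤ a_i, x_i ≥ 0, e_i ∈ ℝ, and ∑ e_i* = 0), then (x*, e*) is a social welfare equilibrium, i.e., it maximizes ∑ f_i(x_i) subject to ∑ e_i = 0, x_i + e_i ≤ a_i, x_i ≥ 0. -/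
open Finset

theorem Finset.sum_le_sum_of_add_mul_le_of_sum_eq_zero {ι R : Type*} [Ring R] [PartialOrder R]
    [IsOrderedAddMonoid R] {s : Finset ι} {u v e d : ι → R} (c : R)
    (h : ∀ i ∈ s, u i + c * e i ≤ v i + c * d i)
    (he : ∑ i ∈ s, e i = 0) (hd : ∑ i ∈ s, d i = 0) :
    ∑ i ∈ s, u i ≤ ∑ i ∈ s, v i := by
  have hsum := sum_le_sum h
  rwa [sum_add_distrib, sum_add_distrib, ← mul_sum, ← mul_sum, he, hd, mul_zero, add_zero,
    add_zero] at hsum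

theorem trading_competitive_implies_social_welfare_general
    (n : ℕ) (a : Fin n → ℝ) (f : Fin n → ℝ → ℝ)
    (lam : ℝ) (xstar estar : Fin n → ℝ)
    (hmax : ∀ i, ∀ x e : ℝ, 0 ≤ x → x + e ≤ a i →
      f i x + lam * e ≤ f i (xstar i) + lam * estar i)
    (hbal : ∑ i, estar i = 0) :
    ∀ x e : Fin n → ℝ, (∀ i, 0 ≤ x i) → (∀ i, x i + e i ≤ a i) →
      (∑ i, e i = 0) → ∑ i, f i (x i) ≤ ∑ i, f i (xstar i) :=
  fun x e hx hxe hb =>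
    sum_le_sum_of_add_mul_le_of_sum_eq_zero lam (fun i _ => hmax i (x i) (e i) (hx i) (hxe i))
      hb hbal

/-- trading model: a competitive equilibrium is a social welfare equilibrium. -/
theorem trading_competitive_implies_social_welfare
    (n : ℕ) (a : Fin n → ℝ) (f : Fin n → ℝ → ℝ)
    (lam : ℝ) (xstar estar : Fin n → ℝ)
    (hfeas : ∀ i, 0 ≤ xstar i ∧ xstar i + estar i ≤ a i)
    (hmax : ∀ i, ∀ x e : ℝ, 0 ≤ x → x + e ≤ a i →
      f i x + lam * e ≤ f i (xstar i) + lam * estar i)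
    (hbal : ∑ i, estar i = 0) :
    ∀ x e : Fin n → ℝ, (∀ i, 0 ≤ x i) → (∀ i, x i + e i ≤ a i) →
      (∑ i, e i = 0) → ∑ i, f i (x i) ≤ ∑ i, f i (xstar i) :=
  trading_competitive_implies_social_welfare_general n a f lam xstar estar hmax hbal
end

section
/- Let b_min, b_max, k_min, k_max > 0 with b_min ≤ b_max and k_min ≤ k_max, and let C > 0. Suppose n·k_min/b_max ≥ C, −n·k_min/b_max + n·k_max/b_min ≤ C, and −n·λ†/b_max + n·k_max/b_min ≤ C for some λ† > 0. Then for all parameters k_i ∈ [k_min, k_max] and b_i ∈ [b_min, b_max] (i = 1,...,n), the value λ* = (∑_i k_i/b_i − C)/(∑_i 1/b_i) satisfies 0 ≤ λ* ≤ λ† and λ* ≤ k_i for all i. -/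
/-!
Write `S = ∑ 1 / b i` and `T = ∑ k i / b i`. The parameter bounds squeeze both sums:
`n / bmax ≤ S` and `n * kmin / bmax ≤ T ≤ n * kmax / bmin`. The first admissibility
inequality gives `C ≤ T`, so the price `(T - C) / S` is nonnegative; the other two bound
`T - C` by `n * μ / bmax ≤ μ * S` for `μ = lamdag` and `μ = kmin ≤ k i` respectively.
-/

open Finset

section

variable {ι : Type*} [Fintype ι] (k b : ι → ℝ)

noncomputable def competitivePrice (C : ℝ) : ℝ := (∑ i, k i / b i - C) / ∑ i, 1 / b i

lemma card_mul_div_le_sum_div {kmin bmax : ℝ} (hk0 : ∀ i, 0 ≤ k i) (hk : ∀ i, kmin ≤ k i)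
    (hb0 : ∀ i, 0 < b i) (hb : ∀ i, b i ≤ bmax) :
    Fintype.card ι * kmin / bmax ≤ ∑ i, k i / b i := by
  have h := card_nsmul_le_sum univ (fun i => k i / b i) (kmin / bmax)
    fun i _ => div_le_div₀ (hk0 i) (hk i) (hb0 i) (hb i)
  simpa [mul_div_assoc] using h

lemma sum_div_le_card_mul_div {kmax bmin : ℝ} (hk0 : ∀ i, 0 ≤ k i) (hk : ∀ i, k i ≤ kmax)
    (hbmin : 0 < bmin) (hb : ∀ i, bmin ≤ b i) :
    ∑ i, k i / b i ≤ Fintype.card ι * kmax / bmin := by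
  have h := sum_le_card_nsmul univ (fun i => k i / b i) (kmax / bmin) fun i _ =>
    calc k i / b i ≤ k i / bmin := div_le_div_of_nonneg_left (hk0 i) hbmin (hb i)
      _ ≤ kmax / bmin := div_le_div_of_nonneg_right (hk i) hbmin.le
  simpa [mul_div_assoc] using h

variable {k b} {C : ℝ}

lemma competitivePrice_nonneg (hb0 : ∀ i, 0 < b i) (h : C ≤ ∑ i, k i / b i) :
    0 ≤ competitivePrice k b C :=
  div_nonneg (sub_nonneg.mpr h) (sum_nonneg fun i _ => one_div_nonneg.mpr (hb0 i).le)

lemma competitivePrice_le {bmax μ : ℝ} (hb0 : ∀ i, 0 < b i) (hb : ∀ i, b i ≤ bmax)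
    (hμ : 0 ≤ μ) (h : ∑ i, k i / b i - C ≤ Fintype.card ι * μ / bmax) :
    competitivePrice k b C ≤ μ := by
  have hS : Fintype.card ι * 1 / bmax ≤ ∑ i, 1 / b i :=
    card_mul_div_le_sum_div (fun _ => 1) b (fun _ => zero_le_one) (fun _ => le_rfl) hb0 hb
  refine div_le_of_le_mul₀ (sum_nonneg fun i _ => one_div_nonneg.mpr (hb0 i).le) hμ ?_
  calc ∑ i, k i / b i - C ≤ Fintype.card ι * μ / bmax := h
    _ = μ * (Fintype.card ι * 1 / bmax) := by ring
    _ ≤ μ * ∑ i, 1 / b i := mul_le_mul_of_nonneg_left hS hμ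

end

theorem social_shaping_price_bounds_general
    (n : ℕ) (bmin bmax kmin kmax : ℝ)
    (hbmin : 0 < bmin) (hkmin : 0 < kmin)
    (C : ℝ) (lamdag : ℝ) (hlamdag : 0 < lamdag)
    (h1 : C ≤ n * kmin / bmax)
    (h2 : -(n * kmin / bmax) + n * kmax / bmin ≤ C)
    (h3 : -(n * lamdag / bmax) + n * kmax / bmin ≤ C)
    (k b : Fin n → ℝ)
    (hki : ∀ i, k i ∈ Set.Icc kmin kmax) (hbi : ∀ i, b i ∈ Set.Icc bmin bmax) :
    0 ≤ (∑ i, k i / b i - C) / (∑ i, 1 / b i) ∧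
    (∑ i, k i / b i - C) / (∑ i, 1 / b i) ≤ lamdag ∧
    ∀ i, (∑ j, k j / b j - C) / (∑ j, 1 / b j) ≤ k i := by
  have hb0 : ∀ i, 0 < b i := fun i => hbmin.trans_le (hbi i).1
  have hk0 : ∀ i, 0 ≤ k i := fun i => hkmin.le.trans (hki i).1
  have hbmax : ∀ i, b i ≤ bmax := fun i => (hbi i).2
  have hT_lo := card_mul_div_le_sum_div k b hk0 (fun i => (hki i).1) hb0 hbmax
  have hT_hi := sum_div_le_card_mul_div k b hk0 (fun i => (hki i).2) hbmin fun i => (hbi i).1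
  rw [Fintype.card_fin] at hT_lo hT_hi
  have h_le_lamdag : competitivePrice k b C ≤ lamdag :=
    competitivePrice_le hb0 hbmax hlamdag.le (by rw [Fintype.card_fin]; linarith)
  have h_le_kmin : competitivePrice k b C ≤ kmin :=
    competitivePrice_le hb0 hbmax hkmin.le (by rw [Fintype.card_fin]; linarith)
  exact ⟨competitivePrice_nonneg hb0 (h1.trans hT_lo), h_le_lamdag,
    fun i => h_le_kmin.trans (hki i).1⟩

/-- social shaping: admissible parameter bounds guarantee a
socially resilient equilibrium price. -/
theorem social_shaping_price_bounds
    (n : ℕ) (bmin bmax kmin kmax : ℝ)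
    (hbmin : 0 < bmin) (hbmax : 0 < bmax) (hkmin : 0 < kmin) (hkmax : 0 < kmax)
    (hb : bmin ≤ bmax) (hk : kmin ≤ kmax)
    (C : ℝ) (hC : 0 < C) (lamdag : ℝ) (hlamdag : 0 < lamdag)
    (h1 : C ≤ n * kmin / bmax)
    (h2 : -(n * kmin / bmax) + n * kmax / bmin ≤ C)
    (h3 : -(n * lamdag / bmax) + n * kmax / bmin ≤ C)
    (k b : Fin n → ℝ)
    (hki : ∀ i, k i ∈ Set.Icc kmin kmax) (hbi : ∀ i, b i ∈ Set.Icc bmin bmax) :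
    0 ≤ (∑ i, k i / b i - C) / (∑ i, 1 / b i) ∧
    (∑ i, k i / b i - C) / (∑ i, 1 / b i) ≤ lamdag ∧
    ∀ i, (∑ j, k j / b j - C) / (∑ j, 1 / b j) ≤ k i :=
  social_shaping_price_bounds_general n bmin bmax kmin kmax hbmin hkmin C lamdag hlamdag h1 h2 h3 k
    b hki hbi
end
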